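/- arXiv:0908.4203 — 6 statements merged into one kernel-verified Lean document; each statement's English description precedes it below -/
import Mathlib

section
/- Let 𝔫 be an H-type algebra with ordered decomposition (𝔷,𝔳). If 𝔫 is non-abelian, then the ordered decomposition is unique: 𝔷 equals the center Z(𝔫) and 𝔳 equals its orthogonal complement. If 𝔫 is abelian and nonzero, there are exactly two ordered decompositions, namely (𝔫, {0}) and ({0}, 𝔫). -/
/-!
Testing the defining identity `‖J(Z)X‖ = ‖Z‖ ‖X‖` with `J(Z)X = 0` shows: for a nonzero `Z ∈ 𝔷`,
no nonzero `X ∈ 𝔳` satisfies `⟪Z, [X, Y]⟫ = 0` for all `Y ∈ 𝔳`. If `𝔫` is non-abelian, some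
bracket is a nonzero element of `𝔷`, so `𝔳` meets the center trivially; as `[𝔫, 𝔷] = 0` puts `𝔷`
inside the center, the orthogonal splitting `𝔫 = 𝔷 ⊕ 𝔷ᗮ` forces `𝔷` to be the center. If `𝔫`
is abelian, every `X ∈ 𝔳` qualifies, so `𝔷 ≠ 0` forces `𝔳 = 0`.
-/

open RealInnerProductSpace

/-- The "center" of a bilinear bracket: elements bracketing to zero with everything. -/
def bracketCenter {n : Type*} [NormedAddCommGroup n] [InnerProductSpace ℝ n]
    (br : n →ₗ[ℝ] n →ₗ[ℝ] n) : Submodule ℝ n where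
  carrier := {x | ∀ y, br x y = 0}
  add_mem' := by
    intro a b ha hb
    intro y
    simp [map_add, LinearMap.add_apply, ha y, hb y]
  zero_mem' := by intro y; simp
  smul_mem' := by
    intro c a ha
    intro y
    simp [map_smul, LinearMap.smul_apply, ha y]

/-- `(z, v)` is an ordered decomposition making the Euclidean Lie algebra `n` (with
Lie bracket `br`) an H-type algebra: `n = z ⊕ v` orthogonally, `[n,z] = 0`,
`[n,n] ⊆ z`, and the Riesz-defined map `J : z → End(v)`,
`⟪J(Z)X, Y⟫ = ⟪Z, [X,Y]⟫`, satisfies `‖J(Z)X‖ = ‖Z‖·‖X‖`. -/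
def IsHTypeDecomp {n : Type*} [NormedAddCommGroup n] [InnerProductSpace ℝ n]
    (br : n →ₗ[ℝ] n →ₗ[ℝ] n) (z v : Submodule ℝ n) : Prop :=
  v = zᗮ ∧
  (∀ x : n, ∀ Z ∈ z, br x Z = 0) ∧
  (∀ x y : n, br x y ∈ z) ∧
  (∀ Z ∈ z, ∀ X ∈ v, ∀ W : n,
      (W ∈ v ∧ ∀ Y ∈ v, ⟪W, Y⟫ = ⟪Z, br X Y⟫) → ‖W‖ = ‖Z‖ * ‖X‖)

namespace IsHTypeDecomp

variable {n : Type*} [NormedAddCommGroup n] [InnerProductSpace ℝ n]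
  {br : n →ₗ[ℝ] n →ₗ[ℝ] n} {z v : Submodule ℝ n}

theorem eq_zero_of_inner_bracket_eq_zero (h : IsHTypeDecomp br z v) {Z X : n}
    (hZ : Z ∈ z) (hZ0 : Z ≠ 0) (hX : X ∈ v) (hZX : ∀ Y ∈ v, ⟪Z, br X Y⟫ = 0) : X = 0 := by
  have hJ := h.2.2.2 Z hZ X hX 0 ⟨v.zero_mem, fun Y hY => by rw [inner_zero_left, hZX Y hY]⟩
  rw [norm_zero, eq_comm, mul_eq_zero, norm_eq_zero, norm_eq_zero] at hJ
  exact hJ.resolve_left hZ0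

theorem le_bracketCenter (h : IsHTypeDecomp br z v) (halt : br.IsAlt) :
    z ≤ bracketCenter br :=
  fun Z hZ y => by rw [← halt.neg, h.2.1 y Z hZ, neg_zero]

theorem orthogonal_inf_bracketCenter_eq_bot (h : IsHTypeDecomp br z v)
    (hbr : ∃ x y : n, br x y ≠ 0) : zᗮ ⊓ bracketCenter br = ⊥ := by
  obtain ⟨x, y, hxy⟩ := hbr
  rw [Submodule.eq_bot_iff]
  rintro X ⟨hXv, hXc⟩
  refine h.eq_zero_of_inner_bracket_eq_zero (h.2.2.1 x y) hxy (h.1 ▸ hXv) fun Y _ => ?_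
  rw [hXc Y, inner_zero_right]

theorem eq_bracketCenter [z.HasOrthogonalProjection] (h : IsHTypeDecomp br z v)
    (halt : br.IsAlt) (hbr : ∃ x y : n, br x y ≠ 0) : z = bracketCenter br := by
  have hsplit := Submodule.sup_orthogonal_inf_of_hasOrthogonalProjection (h.le_bracketCenter halt)
  rwa [h.orthogonal_inf_bracketCenter_eq_bot hbr, sup_bot_eq] at hsplit

theorem eq_bot_of_ne_bot (h : IsHTypeDecomp br z v) (hab : ∀ x y : n, br x y = 0)
    (hz : z ≠ ⊥) : v = ⊥ := by
  obtain ⟨Z, hZ, hZ0⟩ := (Submodule.ne_bot_iff z).mp hz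
  rw [Submodule.eq_bot_iff]
  exact fun X hX =>
    h.eq_zero_of_inner_bracket_eq_zero hZ hZ0 hX fun Y _ => by rw [hab X Y, inner_zero_right]

theorem top_bot (hab : ∀ x y : n, br x y = 0) : IsHTypeDecomp br ⊤ ⊥ := by
  refine ⟨Submodule.top_orthogonal_eq_bot.symm, fun x Z _ => hab x Z,
    fun _ _ => Submodule.mem_top, ?_⟩
  rintro Z - X hX W ⟨hW, -⟩
  rw [Submodule.mem_bot] at hX hW
  rw [hX, hW, norm_zero, mul_zero]

theorem bot_top (hab : ∀ x y : n, br x y = 0) : IsHTypeDecomp br ⊥ ⊤ := by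
  refine ⟨Submodule.bot_orthogonal_eq_top.symm, fun x Z _ => hab x Z,
    fun x y => (hab x y).symm ▸ Submodule.zero_mem ⊥, ?_⟩
  rintro Z hZ X - W ⟨-, hW⟩
  rw [Submodule.mem_bot] at hZ
  have hWW := hW W Submodule.mem_top
  rw [hZ, inner_zero_left, inner_self_eq_zero] at hWW
  rw [hWW, hZ, norm_zero, zero_mul]

end IsHTypeDecomp

theorem htype_ordered_decomposition_unique_general
    {n : Type*} [NormedAddCommGroup n] [InnerProductSpace ℝ n] [FiniteDimensional ℝ n]
    (br : n →ₗ[ℝ] n →ₗ[ℝ] n)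
    (halt : ∀ x : n, br x x = 0) :
    ((∃ x y : n, br x y ≠ 0) →
      ∀ z v : Submodule ℝ n, IsHTypeDecomp br z v →
        z = bracketCenter br ∧ v = (bracketCenter br)ᗮ) ∧
    ((∀ x y : n, br x y = 0) → (∃ x : n, x ≠ 0) →
      ∀ z v : Submodule ℝ n,
        (IsHTypeDecomp br z v ↔ ((z = ⊤ ∧ v = ⊥) ∨ (z = ⊥ ∧ v = ⊤)))) := by
  refine ⟨fun hbr z v h => ?_, fun hab _ z v => ⟨fun h => ?_, ?_⟩⟩
  · have hz := h.eq_bracketCenter halt hbr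
    exact ⟨hz, hz ▸ h.1⟩
  · by_cases hz : z = ⊥
    · exact Or.inr ⟨hz, by rw [h.1, hz, Submodule.bot_orthogonal_eq_top]⟩
    · have hv := h.eq_bot_of_ne_bot hab hz
      exact Or.inl ⟨Submodule.orthogonal_eq_bot_iff.mp (h.1 ▸ hv), hv⟩
  · rintro (⟨rfl, rfl⟩ | ⟨rfl, rfl⟩)
    · exact IsHTypeDecomp.top_bot hab
    · exact IsHTypeDecomp.bot_top hab

/-- for a non-abelian H-type algebra the ordered decomposition is unique,
given by the center and its orthogonal complement; for a nonzero abelian one there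
are exactly the two decompositions `(n, {0})` and `({0}, n)`. -/
theorem htype_ordered_decomposition_unique
    {n : Type*} [NormedAddCommGroup n] [InnerProductSpace ℝ n] [FiniteDimensional ℝ n]
    (br : n →ₗ[ℝ] n →ₗ[ℝ] n)
    (halt : ∀ x : n, br x x = 0)
    (hjac : ∀ x y w : n, br x (br y w) + br y (br w x) + br w (br x y) = 0) :
    ((∃ x y : n, br x y ≠ 0) →
      ∀ z v : Submodule ℝ n, IsHTypeDecomp br z v →
        z = bracketCenter br ∧ v = (bracketCenter br)ᗮ) ∧
    ((∀ x y : n, br x y = 0) → (∃ x : n, x ≠ 0) →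
      ∀ z v : Submodule ℝ n,
        (IsHTypeDecomp br z v ↔ ((z = ⊤ ∧ v = ⊥) ∨ (z = ⊥ ∧ v = ⊤)))) :=
  htype_ordered_decomposition_unique_general br halt
end

section
/- Let (C,e,V,J) be a C-module structure. Then for all ζ ∈ C, J_{\bar ζ} ∘ J_ζ = |ζ|² · id_V = J_ζ ∘ J_{\bar ζ}. In particular, for ζ ≠ 0, setting ζ^{-1} := |ζ|^{-2} \bar ζ one has J_{ζ^{-1}}(J_ζ v) = v = J_ζ(J_{ζ^{-1}} v) for all v ∈ V. -/
/-!
Polarizing `‖J ζ v‖ = ‖ζ‖‖v‖` in both variables gives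
`⟪J ζ u, J η v⟫ + ⟪J ζ v, J η u⟫ = 2⟪ζ, η⟫⟪u, v⟫`. Taking `η = e` shows that `J (conj ζ)` is the
adjoint of `J ζ`, and taking `η = ζ` shows that `J ζ` is `‖ζ‖` times an isometry, so
`J (conj ζ) ∘ J ζ = (J ζ)* ∘ J ζ = ‖ζ‖²`. For a unit vector `e`, conjugation is the reflection in
the line `ℝ e`, hence an involutive isometry, which gives the identity in the other order.
-/

open RealInnerProductSpace

/-- Conjugation in `C` relative to the unit element `e`: `conj ζ = 2⟪ζ,e⟫·e − ζ`. -/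
noncomputable def conjC {C : Type*} [NormedAddCommGroup C] [InnerProductSpace ℝ C]
    (e ζ : C) : C :=
  (2 * ⟪ζ, e⟫) • e - ζ

section Conjugation

variable {C : Type*} [NormedAddCommGroup C] [InnerProductSpace ℝ C] {e : C}

theorem conjC_eq_reflection (he : ‖e‖ = 1) (ζ : C) :
    conjC e ζ = (ℝ ∙ e).reflection ζ := by
  rw [Submodule.reflection_apply, Submodule.starProjection_unit_singleton ℝ he, conjC,
    real_inner_comm]
  module

theorem conjC_conjC (he : ‖e‖ = 1) (ζ : C) : conjC e (conjC e ζ) = ζ := by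
  simp only [conjC_eq_reflection he, Submodule.reflection_reflection]

theorem norm_conjC (he : ‖e‖ = 1) (ζ : C) : ‖conjC e ζ‖ = ‖ζ‖ := by
  rw [conjC_eq_reflection he, LinearIsometryEquiv.norm_map]

end Conjugation

section NormMultiplicative

variable {C V : Type*} [NormedAddCommGroup C] [InnerProductSpace ℝ C]
  [NormedAddCommGroup V] [InnerProductSpace ℝ V] {J : C →ₗ[ℝ] V →ₗ[ℝ] V}

theorem inner_apply_apply_add_inner_apply_apply (hnorm : ∀ ζ v, ‖J ζ v‖ = ‖ζ‖ * ‖v‖)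
    (ζ η : C) (u v : V) :
    ⟪J ζ u, J η v⟫ + ⟪J ζ v, J η u⟫ = 2 * ⟪ζ, η⟫ * ⟪u, v⟫ := by
  have hsq : ∀ ζ v, ‖J ζ v‖ ^ 2 = ‖ζ‖ ^ 2 * ‖v‖ ^ 2 := fun ζ v => by rw [hnorm, mul_pow]
  have hC : ∀ v, ⟪J ζ v, J η v⟫ = ⟪ζ, η⟫ * ‖v‖ ^ 2 := fun v => by
    have h := hsq (ζ + η) v
    rw [map_add, LinearMap.add_apply, norm_add_sq_real, norm_add_sq_real, hsq, hsq] at h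
    linarith
  have h := hC (u + v)
  rw [map_add, map_add, inner_add_left, inner_add_right, inner_add_right, norm_add_sq_real,
    hC u, hC v] at h
  linarith

theorem inner_apply_apply_self (hnorm : ∀ ζ v, ‖J ζ v‖ = ‖ζ‖ * ‖v‖) (ζ : C) (u v : V) :
    ⟪J ζ u, J ζ v⟫ = ‖ζ‖ ^ 2 * ⟪u, v⟫ := by
  have h := inner_apply_apply_add_inner_apply_apply hnorm ζ ζ u v
  rw [real_inner_comm (J ζ u) (J ζ v), real_inner_self_eq_norm_sq] at h
  linarith

theorem inner_apply_left_eq_inner_apply_conjC {e : C} (hJe : ∀ v, J e v = v)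
    (hnorm : ∀ ζ v, ‖J ζ v‖ = ‖ζ‖ * ‖v‖) (ζ : C) (u v : V) :
    ⟪J ζ u, v⟫ = ⟪u, J (conjC e ζ) v⟫ := by
  have h := inner_apply_apply_add_inner_apply_apply hnorm ζ e u v
  rw [hJe, hJe] at h
  rw [conjC, map_sub, map_smul, LinearMap.sub_apply, LinearMap.smul_apply, hJe, inner_sub_right,
    real_inner_smul_right]
  linarith [real_inner_comm u (J ζ v)]

theorem apply_conjC_apply {e : C} (hJe : ∀ v, J e v = v)
    (hnorm : ∀ ζ v, ‖J ζ v‖ = ‖ζ‖ * ‖v‖) (ζ : C) (v : V) :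
    J (conjC e ζ) (J ζ v) = (‖ζ‖ ^ 2) • v := by
  refine ext_inner_right ℝ fun w => ?_
  rw [real_inner_comm, ← inner_apply_left_eq_inner_apply_conjC hJe hnorm,
    inner_apply_apply_self hnorm, real_inner_smul_left, real_inner_comm]

theorem apply_apply_conjC {e : C} (he : ‖e‖ = 1) (hJe : ∀ v, J e v = v)
    (hnorm : ∀ ζ v, ‖J ζ v‖ = ‖ζ‖ * ‖v‖) (ζ : C) (v : V) :
    J ζ (J (conjC e ζ) v) = (‖ζ‖ ^ 2) • v := by
  simpa only [conjC_conjC he, norm_conjC he] using apply_conjC_apply hJe hnorm (conjC e ζ) v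

end NormMultiplicative

theorem cmodule_J_conj_J_general
    {C V : Type*} [NormedAddCommGroup C] [InnerProductSpace ℝ C]
    [NormedAddCommGroup V] [InnerProductSpace ℝ V]
    (J : C →ₗ[ℝ] V →ₗ[ℝ] V) (e : C) (he : ‖e‖ = 1)
    (hJe : ∀ v : V, J e v = v)
    (hnorm : ∀ (ζ : C) (v : V), ‖J ζ v‖ = ‖ζ‖ * ‖v‖) :
    (∀ (ζ : C) (v : V),
        J (conjC e ζ) (J ζ v) = (‖ζ‖ ^ 2) • v ∧ J ζ (J (conjC e ζ) v) = (‖ζ‖ ^ 2) • v) ∧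
    (∀ ζ : C, ζ ≠ 0 → ∀ v : V,
        J ((‖ζ‖ ^ 2)⁻¹ • conjC e ζ) (J ζ v) = v ∧
        J ζ (J ((‖ζ‖ ^ 2)⁻¹ • conjC e ζ) v) = v) := by
  have hleft := apply_conjC_apply hJe hnorm
  have hright := apply_apply_conjC he hJe hnorm
  refine ⟨fun ζ v => ⟨hleft ζ v, hright ζ v⟩, fun ζ hζ v => ?_⟩
  have hne : ‖ζ‖ ^ 2 ≠ 0 := pow_ne_zero 2 (norm_ne_zero_iff.mpr hζ)
  constructor
  · rw [map_smul, LinearMap.smul_apply, hleft, inv_smul_smul₀ hne]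
  · rw [map_smul, LinearMap.smul_apply, map_smul, hright, inv_smul_smul₀ hne]

/-- in a C-module structure, `J_{conj ζ} ∘ J_ζ = ‖ζ‖²·id = J_ζ ∘ J_{conj ζ}`;
in particular for `ζ ≠ 0`, `ζ⁻¹ := ‖ζ‖⁻²·conj ζ` satisfies
`J_{ζ⁻¹}(J_ζ v) = v = J_ζ(J_{ζ⁻¹} v)`. -/
theorem cmodule_J_conj_J
    {C V : Type*} [NormedAddCommGroup C] [InnerProductSpace ℝ C] [FiniteDimensional ℝ C]
    [NormedAddCommGroup V] [InnerProductSpace ℝ V] [FiniteDimensional ℝ V]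
    (J : C →ₗ[ℝ] V →ₗ[ℝ] V) (e : C) (he : ‖e‖ = 1)
    (hJe : ∀ v : V, J e v = v)
    (hnorm : ∀ (ζ : C) (v : V), ‖J ζ v‖ = ‖ζ‖ * ‖v‖) :
    (∀ (ζ : C) (v : V),
        J (conjC e ζ) (J ζ v) = (‖ζ‖ ^ 2) • v ∧ J ζ (J (conjC e ζ) v) = (‖ζ‖ ^ 2) • v) ∧
    (∀ ζ : C, ζ ≠ 0 → ∀ v : V,
        J ((‖ζ‖ ^ 2)⁻¹ • conjC e ζ) (J ζ v) = v ∧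
        J ζ (J ((‖ζ‖ ^ 2)⁻¹ • conjC e ζ) v) = v) :=
  cmodule_J_conj_J_general J e he hJe hnorm
end

section
/- Let (C,e,V,J) be a C-module structure and define β₂: V×V → C by ⟨β₂(v,u), ζ⟩ = ⟨J(ζ,u), v⟩ for all ζ ∈ C. Then β₂ is ℝ-bilinear, satisfies β₂(v,u) = conjugate of β₂(u,v), and β₂(v,v) = |v|² e for all u,v ∈ V. -/
/-!
Both identities come from polarizing `‖J ζ v‖ = ‖ζ‖‖v‖`: in `ζ` it gives
`⟪J ζ v, J η v⟫ = ⟪ζ, η⟫‖v‖²`, so `⟪J ζ v, v⟫ = ⟪ζ, e⟫‖v‖²` (take `η = e`), and polarizing this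
in `v` gives `⟪J ζ u, v⟫ + ⟪J ζ v, u⟫ = 2⟪ζ, e⟫⟪u, v⟫`. Read through the defining relation of
`β₂`, these are `β₂(v,v) = ‖v‖² e` and `β₂(v,u) + β₂(u,v) = 2⟪u,v⟫ e = 2⟪β₂(u,v), e⟫ e`.
-/

open RealInnerProductSpace

section

variable {C V W : Type*} [NormedAddCommGroup C] [InnerProductSpace ℝ C]
  [NormedAddCommGroup V] [InnerProductSpace ℝ V] [NormedAddCommGroup W] [InnerProductSpace ℝ W]

theorem LinearMap.inner_map_map_of_norm_map_eq_mul (f : C →ₗ[ℝ] W) {c : ℝ}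
    (hf : ∀ ζ, ‖f ζ‖ = c * ‖ζ‖) (ζ η : C) : ⟪f ζ, f η⟫ = c ^ 2 * ⟪ζ, η⟫ := by
  have hsum := hf (ζ + η)
  rw [map_add] at hsum
  have hsq : ‖f ζ + f η‖ ^ 2 = c ^ 2 * ‖ζ + η‖ ^ 2 := by rw [hsum]; ring
  rw [norm_add_sq_real, norm_add_sq_real, hf, hf] at hsq
  linear_combination hsq / 2

theorem inner_apply_apply_eq_mul_norm_sq (J : C →ₗ[ℝ] V →ₗ[ℝ] W)
    (hnorm : ∀ ζ v, ‖J ζ v‖ = ‖ζ‖ * ‖v‖) (ζ η : C) (v : V) :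
    ⟪J ζ v, J η v⟫ = ⟪ζ, η⟫ * ‖v‖ ^ 2 := by
  rw [mul_comm]
  exact (J.flip v).inner_map_map_of_norm_map_eq_mul (fun ζ => by simp [hnorm, mul_comm]) ζ η

theorem inner_apply_self_of_apply_unit (J : C →ₗ[ℝ] V →ₗ[ℝ] V) {e : C}
    (hJe : ∀ v, J e v = v) (hnorm : ∀ ζ v, ‖J ζ v‖ = ‖ζ‖ * ‖v‖) (ζ : C) (v : V) :
    ⟪J ζ v, v⟫ = ⟪ζ, e⟫ * ‖v‖ ^ 2 := by
  simpa [hJe] using inner_apply_apply_eq_mul_norm_sq J hnorm ζ e v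

theorem inner_apply_add_inner_apply_swap (J : C →ₗ[ℝ] V →ₗ[ℝ] V) {e : C}
    (hJe : ∀ v, J e v = v) (hnorm : ∀ ζ v, ‖J ζ v‖ = ‖ζ‖ * ‖v‖) (ζ : C) (u v : V) :
    ⟪J ζ u, v⟫ + ⟪J ζ v, u⟫ = 2 * ⟪ζ, e⟫ * ⟪u, v⟫ := by
  have hself := inner_apply_self_of_apply_unit J hJe hnorm ζ
  have hsum := hself (u + v)
  rw [map_add, inner_add_left, inner_add_right, inner_add_right, hself, hself,
    norm_add_sq_real] at hsum
  linear_combination hsum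

end

theorem beta2_hermitian_general
    {C V : Type*} [NormedAddCommGroup C] [InnerProductSpace ℝ C]
    [NormedAddCommGroup V] [InnerProductSpace ℝ V]
    (J : C →ₗ[ℝ] V →ₗ[ℝ] V) (e : C)
    (hJe : ∀ v : V, J e v = v)
    (hnorm : ∀ (ζ : C) (v : V), ‖J ζ v‖ = ‖ζ‖ * ‖v‖)
    (β₂ : V → V → C)
    (hβ : ∀ (v u : V) (ζ : C), ⟪β₂ v u, ζ⟫ = ⟪J ζ u, v⟫) :
    (∀ (a : ℝ) (v v' u : V), β₂ (a • v + v') u = a • β₂ v u + β₂ v' u) ∧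
    (∀ (a : ℝ) (v u u' : V), β₂ v (a • u + u') = a • β₂ v u + β₂ v u') ∧
    (∀ u v : V, β₂ v u = conjC e (β₂ u v)) ∧
    (∀ v : V, β₂ v v = (‖v‖ ^ 2) • e) := by
  refine ⟨fun a v v' u => ext_inner_right ℝ fun ζ => ?_,
    fun a v u u' => ext_inner_right ℝ fun ζ => ?_,
    fun u v => ext_inner_right ℝ fun ζ => ?_, fun v => ext_inner_right ℝ fun ζ => ?_⟩
  · simp only [hβ, inner_add_left, inner_add_right, real_inner_smul_left, real_inner_smul_right]
  · simp only [hβ, map_add, map_smul, inner_add_left, real_inner_smul_left]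
  · rw [conjC, inner_sub_left, real_inner_smul_left, hβ, hβ, hβ, hJe, real_inner_comm ζ e]
    linear_combination inner_apply_add_inner_apply_swap J hJe hnorm ζ v u
  · rw [hβ, inner_apply_self_of_apply_unit J hJe hnorm, real_inner_smul_left, real_inner_comm ζ e, mul_comm]

/-- the map `β₂ : V × V → C` determined by `⟪β₂(v,u), ζ⟫ = ⟪J(ζ,u), v⟫`
is ℝ-bilinear, satisfies `β₂(v,u) = conj (β₂(u,v))`, and `β₂(v,v) = ‖v‖²·e`. -/
theorem beta2_hermitian
    {C V : Type*} [NormedAddCommGroup C] [InnerProductSpace ℝ C] [FiniteDimensional ℝ C]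
    [NormedAddCommGroup V] [InnerProductSpace ℝ V] [FiniteDimensional ℝ V]
    (J : C →ₗ[ℝ] V →ₗ[ℝ] V) (e : C) (he : ‖e‖ = 1)
    (hJe : ∀ v : V, J e v = v)
    (hnorm : ∀ (ζ : C) (v : V), ‖J ζ v‖ = ‖ζ‖ * ‖v‖)
    (β₂ : V → V → C)
    (hβ : ∀ (v u : V) (ζ : C), ⟪β₂ v u, ζ⟫ = ⟪J ζ u, v⟫) :
    (∀ (a : ℝ) (v v' u : V), β₂ (a • v + v') u = a • β₂ v u + β₂ v' u) ∧
    (∀ (a : ℝ) (v u u' : V), β₂ v (a • u + u') = a • β₂ v u + β₂ v u') ∧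
    (∀ u v : V, β₂ v u = conjC e (β₂ u v)) ∧
    (∀ v : V, β₂ v v = (‖v‖ ^ 2) • e) :=
  beta2_hermitian_general J e hJe hnorm β₂ hβ
end

section
/- (Cauchy–Schwarz for β₂) Let (C,e,V,J) be a J²C-module structure and β₂ its associated hermitian form. Then for all u,v ∈ V: |β₂(u,v)| ≤ |u|·|v|, with equality if and only if v ∈ Cu or u ∈ Cv. -/
open RealInnerProductSpace

/-!
The inequality is Cauchy–Schwarz in `V` applied to `‖β₂ u v‖² = ⟪J (β₂ u v) v, u⟫`. For the
equality case, `J (β₂ u v) v / ‖v‖²` is the orthogonal projection of `u` on `C v`, so equality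
forces `u ∈ C v` by Pythagoras. Conversely `β₂ (J ζ v) v = ‖v‖² ζ` and `β₂ u (J ζ u) = ‖u‖² ζ̄`,
where the conjugation `ζ ↦ ζ̄` is the reflection of `C` in the line `ℝ e`: `J ζ̄` is the adjoint
of `J ζ`.
-/

theorem Submodule.inner_reflection_left {𝕜 E : Type*} [RCLike 𝕜] [NormedAddCommGroup E]
    [InnerProductSpace 𝕜 E] (K : Submodule 𝕜 E) [K.HasOrthogonalProjection] (x y : E) :
    inner 𝕜 (K.reflection x) y = inner 𝕜 x (K.reflection y) := by
  conv_lhs => rw [← K.reflection_reflection y]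
  rw [LinearIsometryEquiv.inner_map_map]

theorem Submodule.reflection_singleton_of_norm_eq_one {E : Type*} [NormedAddCommGroup E]
    [InnerProductSpace ℝ E] {e : E} (he : ‖e‖ = 1) (x : E) :
    (ℝ ∙ e).reflection x = (2 * ⟪e, x⟫) • e - x := by
  rw [Submodule.reflection_singleton_apply, he]
  module

namespace J2CModule

variable {C V : Type*} [NormedAddCommGroup C] [InnerProductSpace ℝ C]
  [NormedAddCommGroup V] [InnerProductSpace ℝ V] {J : C →ₗ[ℝ] V →ₗ[ℝ] V}

theorem inner_apply_apply_same (hnorm : ∀ (ζ : C) (v : V), ‖J ζ v‖ = ‖ζ‖ * ‖v‖)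
    (ζ η : C) (v : V) : ⟪J ζ v, J η v⟫ = ⟪ζ, η⟫ * ‖v‖ ^ 2 := by
  have h := congrArg (· ^ 2) (hnorm (ζ + η) v)
  simp only [map_add, LinearMap.add_apply, mul_pow, norm_add_sq_real, hnorm] at h
  linarith

theorem inner_apply_apply_add_inner_apply_apply
    (hnorm : ∀ (ζ : C) (v : V), ‖J ζ v‖ = ‖ζ‖ * ‖v‖) (ζ η : C) (v w : V) :
    ⟪J ζ v, J η w⟫ + ⟪J ζ w, J η v⟫ = 2 * ⟪ζ, η⟫ * ⟪v, w⟫ := by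
  have h := inner_apply_apply_same hnorm ζ η (v + w)
  simp only [map_add, inner_add_left, inner_add_right, norm_add_sq_real,
    inner_apply_apply_same hnorm] at h
  linarith

theorem inner_apply_left {e : C} (he : ‖e‖ = 1) (hJe : ∀ v : V, J e v = v)
    (hnorm : ∀ (ζ : C) (v : V), ‖J ζ v‖ = ‖ζ‖ * ‖v‖) (η : C) (v w : V) :
    ⟪J η v, w⟫ = ⟪v, J ((ℝ ∙ e).reflection η) w⟫ := by
  have h := inner_apply_apply_add_inner_apply_apply hnorm e η v w
  rw [hJe, hJe] at h
  rw [Submodule.reflection_singleton_of_norm_eq_one he, map_sub, map_smul, LinearMap.sub_apply,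
    LinearMap.smul_apply, hJe, inner_sub_right, real_inner_smul_right]
  linarith [real_inner_comm (J η v) w, real_inner_comm v w]

variable {β₂ : V → V → C}

theorem norm_beta2_sq (hβ : ∀ (v u : V) (ζ : C), ⟪β₂ v u, ζ⟫ = ⟪J ζ u, v⟫) (u v : V) :
    ‖β₂ u v‖ ^ 2 = ⟪J (β₂ u v) v, u⟫ := by
  rw [← hβ, real_inner_self_eq_norm_sq]

theorem norm_beta2_le (hnorm : ∀ (ζ : C) (v : V), ‖J ζ v‖ = ‖ζ‖ * ‖v‖)
    (hβ : ∀ (v u : V) (ζ : C), ⟪β₂ v u, ζ⟫ = ⟪J ζ u, v⟫) (u v : V) :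
    ‖β₂ u v‖ ≤ ‖u‖ * ‖v‖ := by
  have h : ‖β₂ u v‖ ^ 2 ≤ ‖β₂ u v‖ * (‖u‖ * ‖v‖) := by
    calc ‖β₂ u v‖ ^ 2 = ⟪J (β₂ u v) v, u⟫ := norm_beta2_sq hβ u v
      _ ≤ ‖J (β₂ u v) v‖ * ‖u‖ := real_inner_le_norm _ _
      _ = ‖β₂ u v‖ * (‖u‖ * ‖v‖) := by rw [hnorm]; ring
  nlinarith [norm_nonneg (β₂ u v), mul_nonneg (norm_nonneg u) (norm_nonneg v)]

theorem norm_sq_smul_sub_apply_beta2 (hnorm : ∀ (ζ : C) (v : V), ‖J ζ v‖ = ‖ζ‖ * ‖v‖)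
    (hβ : ∀ (v u : V) (ζ : C), ⟪β₂ v u, ζ⟫ = ⟪J ζ u, v⟫) (u v : V) :
    ‖‖v‖ ^ 2 • u - J (β₂ u v) v‖ ^ 2 = ‖v‖ ^ 2 * ((‖u‖ * ‖v‖) ^ 2 - ‖β₂ u v‖ ^ 2) := by
  rw [norm_sub_sq_real, real_inner_smul_left, real_inner_comm, ← norm_beta2_sq hβ, norm_smul,
    hnorm, Real.norm_of_nonneg (by positivity)]
  ring

theorem exists_eq_apply_of_norm_beta2_eq (hnorm : ∀ (ζ : C) (v : V), ‖J ζ v‖ = ‖ζ‖ * ‖v‖)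
    (hβ : ∀ (v u : V) (ζ : C), ⟪β₂ v u, ζ⟫ = ⟪J ζ u, v⟫) {u v : V}
    (h : ‖β₂ u v‖ = ‖u‖ * ‖v‖) (hv : v ≠ 0) : ∃ ζ : C, u = J ζ v := by
  have hsq := norm_sq_smul_sub_apply_beta2 hnorm hβ u v
  rw [h, sub_self, mul_zero, sq_eq_zero_iff, norm_eq_zero, sub_eq_zero] at hsq
  have hv2 : ‖v‖ ^ 2 ≠ 0 := by positivity
  refine ⟨(‖v‖ ^ 2)⁻¹ • β₂ u v, ?_⟩
  rw [map_smul, LinearMap.smul_apply, ← hsq, inv_smul_smul₀ hv2]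

theorem beta2_apply_left (hnorm : ∀ (ζ : C) (v : V), ‖J ζ v‖ = ‖ζ‖ * ‖v‖)
    (hβ : ∀ (v u : V) (ζ : C), ⟪β₂ v u, ζ⟫ = ⟪J ζ u, v⟫) (ζ : C) (v : V) :
    β₂ (J ζ v) v = ‖v‖ ^ 2 • ζ := by
  refine ext_inner_right ℝ fun η => ?_
  rw [hβ, inner_apply_apply_same hnorm, real_inner_smul_left, real_inner_comm]
  ring

theorem beta2_apply_right {e : C} (he : ‖e‖ = 1) (hJe : ∀ v : V, J e v = v)
    (hnorm : ∀ (ζ : C) (v : V), ‖J ζ v‖ = ‖ζ‖ * ‖v‖)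
    (hβ : ∀ (v u : V) (ζ : C), ⟪β₂ v u, ζ⟫ = ⟪J ζ u, v⟫) (ζ : C) (u : V) :
    β₂ u (J ζ u) = ‖u‖ ^ 2 • (ℝ ∙ e).reflection ζ := by
  refine ext_inner_right ℝ fun η => ?_
  rw [hβ, inner_apply_left he hJe hnorm, inner_apply_apply_same hnorm, real_inner_smul_left,
    Submodule.inner_reflection_left]
  ring

end J2CModule

open J2CModule in
theorem beta2_cauchy_schwarz_general
    {C V : Type*} [NormedAddCommGroup C] [InnerProductSpace ℝ C]
    [NormedAddCommGroup V] [InnerProductSpace ℝ V]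
    (J : C →ₗ[ℝ] V →ₗ[ℝ] V) (e : C) (he : ‖e‖ = 1)
    (hJe : ∀ v : V, J e v = v)
    (hnorm : ∀ (ζ : C) (v : V), ‖J ζ v‖ = ‖ζ‖ * ‖v‖)
    (β₂ : V → V → C)
    (hβ : ∀ (v u : V) (ζ : C), ⟪β₂ v u, ζ⟫ = ⟪J ζ u, v⟫) :
    ∀ u v : V,
      ‖β₂ u v‖ ≤ ‖u‖ * ‖v‖ ∧
      (‖β₂ u v‖ = ‖u‖ * ‖v‖ ↔ ((∃ ζ : C, v = J ζ u) ∨ (∃ ζ : C, u = J ζ v))) := by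
  intro u v
  refine ⟨norm_beta2_le hnorm hβ u v, fun h => ?_, ?_⟩
  · by_cases hv : v = 0
    · exact Or.inl ⟨0, by simp [hv]⟩
    · exact Or.inr (exists_eq_apply_of_norm_beta2_eq hnorm hβ h hv)
  · rintro (⟨ζ, rfl⟩ | ⟨ζ, rfl⟩)
    · rw [beta2_apply_right he hJe hnorm hβ, norm_smul, LinearIsometryEquiv.norm_map, hnorm,
        norm_pow, norm_norm]
      ring
    · rw [beta2_apply_left hnorm hβ, norm_smul, hnorm, norm_pow, norm_norm]
      ring

/-- Cauchy–Schwarz for `β₂`: in a J²C-module structure,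
`‖β₂(u,v)‖ ≤ ‖u‖·‖v‖`, with equality iff `v ∈ Cu` or `u ∈ Cv`. -/
theorem beta2_cauchy_schwarz
    {C V : Type*} [NormedAddCommGroup C] [InnerProductSpace ℝ C] [FiniteDimensional ℝ C]
    [NormedAddCommGroup V] [InnerProductSpace ℝ V] [FiniteDimensional ℝ V]
    (J : C →ₗ[ℝ] V →ₗ[ℝ] V) (e : C) (he : ‖e‖ = 1)
    (hJe : ∀ v : V, J e v = v)
    (hnorm : ∀ (ζ : C) (v : V), ‖J ζ v‖ = ‖ζ‖ * ‖v‖)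
    (hJ2 : ∀ (ζ η : C) (v : V), ∃ τ : C, J ζ (J η v) = J τ v)
    (β₂ : V → V → C)
    (hβ : ∀ (v u : V) (ζ : C), ⟪β₂ v u, ζ⟫ = ⟪J ζ u, v⟫) :
    ∀ u v : V,
      ‖β₂ u v‖ ≤ ‖u‖ * ‖v‖ ∧
      (‖β₂ u v‖ = ‖u‖ * ‖v‖ ↔ ((∃ ζ : C, v = J ζ u) ∨ (∃ ζ : C, u = J ζ v))) :=
  beta2_cauchy_schwarz_general J e he hJe hnorm β₂ hβ
end

section
/- Let (C,e,V,J) be a J²C-module structure with associated Heisenberg-type group N = 𝔷 × 𝔳 (𝔷 = e^⊥, 𝔳 = V) with multiplication (Z₁,X₁)(Z₂,X₂) = (Z₁+Z₂+½[X₁,X₂], X₁+X₂). Then the map p: ℝ × N → ℝ≥0 defined by p(k,Z,X) = |¼|X|²e + |k|e + Z|^{1/2} is a group norm on the direct product group ℝ × N: p(g)=0 iff g is the identity, p(g^{-1})=p(g), and p(gh) ≤ p(g)+p(h). -/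
open RealInnerProductSpace

section Aux

variable {C : Type*} [NormedAddCommGroup C] [InnerProductSpace ℝ C]

lemma aux_norm_sq_orth (e : C) (he : ‖e‖ = 1) (Z : C) (hZ : ⟪Z, e⟫ = 0) (c : ℝ) :
    ‖c • e + Z‖ ^ 2 = c ^ 2 + ‖Z‖ ^ 2 := by
  have h1 : ⟪c • e, Z⟫ = 0 := by
    rw [real_inner_smul_left, real_inner_comm, hZ, mul_zero]
  rw [norm_add_sq_real, h1, norm_smul, he, mul_one, Real.norm_eq_abs, sq_abs]
  ring

lemma aux_coef_le (e : C) (he : ‖e‖ = 1) (Z : C) (hZ : ⟪Z, e⟫ = 0) (c : ℝ) (hc : 0 ≤ c) :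
    c ≤ ‖c • e + Z‖ := by
  have h := aux_norm_sq_orth e he Z hZ c
  nlinarith [norm_nonneg (c • e + Z), sq_nonneg ‖Z‖]

lemma aux_mono (e : C) (he : ‖e‖ = 1) (Z : C) (hZ : ⟪Z, e⟫ = 0) (c c' : ℝ)
    (hc : 0 ≤ c) (hcc' : c ≤ c') : ‖c • e + Z‖ ≤ ‖c' • e + Z‖ := by
  have e1 := aux_norm_sq_orth e he Z hZ c
  have e2 := aux_norm_sq_orth e he Z hZ c'
  nlinarith [norm_nonneg (c • e + Z), norm_nonneg (c' • e + Z)]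

end Aux

set_option maxHeartbeats 2000000 in
/-- for a J²C-module structure `(C, e, V, J)` with `𝔷 = e^⊥ ⊂ C`,
`𝔳 = V`, and the Heisenberg-type group `N = 𝔷 × 𝔳` with multiplication
`(Z₁,X₁)(Z₂,X₂) = (Z₁+Z₂+½[X₁,X₂], X₁+X₂)`, the map
`p(k,Z,X) = |¼|X|²e + |k|e + Z|^{1/2}` is a group norm on `ℝ × N`:
it vanishes exactly at the identity, is invariant under inversion, and is
subadditive with respect to the group multiplication. -/
theorem groupnorm_on_R_times_N
    {C V : Type*} [NormedAddCommGroup C] [InnerProductSpace ℝ C] [FiniteDimensional ℝ C]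
    [NormedAddCommGroup V] [InnerProductSpace ℝ V] [FiniteDimensional ℝ V]
    (J : C →ₗ[ℝ] V →ₗ[ℝ] V) (e : C) (he : ‖e‖ = 1)
    (hJe : ∀ v : V, J e v = v)
    (hnorm : ∀ (ζ : C) (v : V), ‖J ζ v‖ = ‖ζ‖ * ‖v‖)
    (hJ2 : ∀ (ζ η : C) (v : V), ∃ τ : C, J ζ (J η v) = J τ v)
    (br : V → V → C)
    (hbr_mem : ∀ X Y : V, ⟪br X Y, e⟫ = 0)
    (hbr : ∀ (X Y : V) (Z : C), ⟪Z, e⟫ = 0 → ⟪Z, br X Y⟫ = ⟪J Z X, Y⟫)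
    (p : ℝ → C → V → ℝ)
    (hp : ∀ (k : ℝ) (Z : C) (X : V),
      p k Z X = Real.sqrt ‖((1/4) * ‖X‖ ^ 2 + |k|) • e + Z‖) :
    (∀ (k : ℝ) (Z : C) (X : V), ⟪Z, e⟫ = 0 →
        (p k Z X = 0 ↔ (k = 0 ∧ Z = 0 ∧ X = 0))) ∧
    (∀ (k : ℝ) (Z : C) (X : V), ⟪Z, e⟫ = 0 → p (-k) (-Z) (-X) = p k Z X) ∧
    (∀ (k₁ k₂ : ℝ) (Z₁ Z₂ : C) (X₁ X₂ : V), ⟪Z₁, e⟫ = 0 → ⟪Z₂, e⟫ = 0 →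
        p (k₁ + k₂) (Z₁ + Z₂ + (1/2 : ℝ) • br X₁ X₂) (X₁ + X₂)
          ≤ p k₁ Z₁ X₁ + p k₂ Z₂ X₂) := by
  -- the key Cauchy–Schwarz type bound for β(X,Y) = ⟪X,Y⟫ e + br X Y
  have hbeta : ∀ X Y : V, ‖(⟪X, Y⟫ : ℝ) • e + br X Y‖ ≤ ‖X‖ * ‖Y‖ := by
    intro X Y
    set β : C := (⟪X, Y⟫ : ℝ) • e + br X Y with hβ
    have key : ∀ ζ : C, ⟪ζ, β⟫ = ⟪J ζ X, Y⟫ := by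
      intro ζ
      have hζ'e : ⟪ζ - (⟪ζ, e⟫ : ℝ) • e, e⟫ = 0 := by
        rw [inner_sub_left, real_inner_smul_left, real_inner_self_eq_norm_sq, he]
        ring
      have h1 := hbr X Y _ hζ'e
      have h2 : ⟪e, br X Y⟫ = 0 := by rw [real_inner_comm]; exact hbr_mem X Y
      have hJζ' : J (ζ - (⟪ζ, e⟫ : ℝ) • e) X = J ζ X - (⟪ζ, e⟫ : ℝ) • X := by
        rw [map_sub, map_smul]
        simp [hJe]
      rw [hJζ', inner_sub_left, inner_sub_left, real_inner_smul_left,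
        real_inner_smul_left, h2, mul_zero, sub_zero] at h1
      rw [hβ, inner_add_right, real_inner_smul_right]
      linear_combination h1
    have h3 : ‖β‖ ^ 2 = ⟪J β X, Y⟫ := by
      rw [← key β, real_inner_self_eq_norm_sq]
    have h4 : ⟪J β X, Y⟫ ≤ ‖J β X‖ * ‖Y‖ := real_inner_le_norm _ _
    rw [hnorm β X] at h4
    rcases eq_or_lt_of_le (norm_nonneg β) with h | h
    · rw [← h]; positivity
    · nlinarith
  refine ⟨?_, ?_, ?_⟩
  · intro k Z X hZ
    rw [hp]
    constructor
    · intro h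
      have h0 : ‖((1/4) * ‖X‖ ^ 2 + |k|) • e + Z‖ = 0 :=
        (Real.sqrt_eq_zero (norm_nonneg _)).mp h
      have hv : ((1/4) * ‖X‖ ^ 2 + |k|) • e + Z = 0 := norm_eq_zero.mp h0
      have hsq := aux_norm_sq_orth e he Z hZ ((1/4) * ‖X‖ ^ 2 + |k|)
      rw [hv] at hsq
      simp only [norm_zero] at hsq
      have ha2 : ((1/4) * ‖X‖ ^ 2 + |k|) ^ 2 = 0 := by nlinarith [sq_nonneg ‖Z‖]
      have ha : (1/4) * ‖X‖ ^ 2 + |k| = 0 := by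
        exact pow_eq_zero_iff two_ne_zero |>.mp ha2
      have hZ2 : ‖Z‖ ^ 2 = 0 := by
        nlinarith [sq_nonneg ((1/4) * ‖X‖ ^ 2 + |k|)]
      have hk : k = 0 := by
        have hk0 : |k| = 0 := by nlinarith [sq_nonneg ‖X‖, abs_nonneg k]
        exact abs_eq_zero.mp hk0
      have hX : X = 0 := by
        have hX0 : ‖X‖ ^ 2 = 0 := by nlinarith [sq_nonneg ‖X‖, abs_nonneg k]
        have : ‖X‖ = 0 := pow_eq_zero_iff two_ne_zero |>.mp hX0
        exact norm_eq_zero.mp this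
      have hZ0 : Z = 0 := by
        have : ‖Z‖ = 0 := pow_eq_zero_iff two_ne_zero |>.mp hZ2
        exact norm_eq_zero.mp this
      exact ⟨hk, hZ0, hX⟩
    · rintro ⟨hk, hZ0, hX⟩
      simp [hk, hZ0, hX]
  · intro k Z X hZ
    rw [hp, hp, abs_neg, norm_neg]
    congr 1
    have hZ' : ⟪-Z, e⟫ = 0 := by rw [inner_neg_left, hZ, neg_zero]
    have e1 := aux_norm_sq_orth e he (-Z) hZ' ((1/4) * ‖X‖ ^ 2 + |k|)
    have e2 := aux_norm_sq_orth e he Z hZ ((1/4) * ‖X‖ ^ 2 + |k|)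
    have hsq : ‖((1/4) * ‖X‖ ^ 2 + |k|) • e + -Z‖ ^ 2
        = ‖((1/4) * ‖X‖ ^ 2 + |k|) • e + Z‖ ^ 2 := by
      rw [e1, e2, norm_neg]
    calc ‖((1/4) * ‖X‖ ^ 2 + |k|) • e + -Z‖
        = Real.sqrt (‖((1/4) * ‖X‖ ^ 2 + |k|) • e + -Z‖ ^ 2) := by
          rw [Real.sqrt_sq (norm_nonneg _)]
      _ = Real.sqrt (‖((1/4) * ‖X‖ ^ 2 + |k|) • e + Z‖ ^ 2) := by rw [hsq]
      _ = ‖((1/4) * ‖X‖ ^ 2 + |k|) • e + Z‖ := Real.sqrt_sq (norm_nonneg _)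
  · intro k₁ k₂ Z₁ Z₂ X₁ X₂ hZ₁ hZ₂
    set a₁ : ℝ := (1/4) * ‖X₁‖ ^ 2 + |k₁| with ha₁
    set a₂ : ℝ := (1/4) * ‖X₂‖ ^ 2 + |k₂| with ha₂
    set c₁ : C := a₁ • e + Z₁ with hc₁
    set c₂ : C := a₂ • e + Z₂ with hc₂
    set W : C := Z₁ + Z₂ + (1/2 : ℝ) • br X₁ X₂ with hW
    set A : ℝ := (1/4) * ‖X₁ + X₂‖ ^ 2 + |k₁ + k₂| with hA
    set A' : ℝ := a₁ + a₂ + (1/2) * ⟪X₁, X₂⟫ with hA'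
    have ha₁0 : 0 ≤ a₁ := by positivity
    have ha₂0 : 0 ≤ a₂ := by positivity
    have hA0 : 0 ≤ A := by positivity
    have hWe : ⟪W, e⟫ = 0 := by
      rw [hW, inner_add_left, inner_add_left, real_inner_smul_left, hZ₁, hZ₂, hbr_mem]
      ring
    have hnX : ‖X₁ + X₂‖ ^ 2 = ‖X₁‖ ^ 2 + 2 * ⟪X₁, X₂⟫ + ‖X₂‖ ^ 2 := norm_add_sq_real X₁ X₂
    have hAA' : A ≤ A' := by
      rw [hA, hA', hnX, ha₁, ha₂]
      have := abs_add_le k₁ k₂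
      linarith
    have step1 : ‖A • e + W‖ ≤ ‖A' • e + W‖ :=
      aux_mono e he W hWe A A' hA0 hAA'
    have hdecomp : A' • e + W = c₁ + c₂ + (1/2 : ℝ) • ((⟪X₁, X₂⟫ : ℝ) • e + br X₁ X₂) := by
      rw [hA', hW, hc₁, hc₂]
      have hs : (1/2 : ℝ) • ((⟪X₁, X₂⟫ : ℝ) • e + br X₁ X₂)
          = ((1/2) * ⟪X₁, X₂⟫) • e + (1/2 : ℝ) • br X₁ X₂ := by
        rw [smul_add, smul_smul]
      rw [hs, add_smul, add_smul]
      abel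
    have step2 : ‖A' • e + W‖ ≤ ‖c₁‖ + ‖c₂‖ + (1/2) * (‖X₁‖ * ‖X₂‖) := by
      rw [hdecomp]
      have t1 : ‖c₁ + c₂ + (1/2 : ℝ) • ((⟪X₁, X₂⟫ : ℝ) • e + br X₁ X₂)‖
          ≤ ‖c₁‖ + ‖c₂‖ + ‖(1/2 : ℝ) • ((⟪X₁, X₂⟫ : ℝ) • e + br X₁ X₂)‖ :=
        norm_add₃_le
      have t2 : ‖(1/2 : ℝ) • ((⟪X₁, X₂⟫ : ℝ) • e + br X₁ X₂)‖
          ≤ (1/2) * (‖X₁‖ * ‖X₂‖) := by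
        rw [norm_smul]
        have := hbeta X₁ X₂
        have h12 : ‖(1/2 : ℝ)‖ = (1/2 : ℝ) := by norm_num
        rw [h12]
        nlinarith
      linarith
    have hp₁c : p k₁ Z₁ X₁ = Real.sqrt ‖c₁‖ := by rw [hp k₁ Z₁ X₁]
    have hp₂c : p k₂ Z₂ X₂ = Real.sqrt ‖c₂‖ := by rw [hp k₂ Z₂ X₂]
    have hX₁c : (1/2) * ‖X₁‖ ≤ p k₁ Z₁ X₁ := by
      rw [hp₁c]
      have h1 : ((1/2) * ‖X₁‖) ^ 2 ≤ ‖c₁‖ := by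
        have := aux_coef_le e he Z₁ hZ₁ a₁ ha₁0
        rw [← hc₁] at this
        rw [ha₁] at this
        nlinarith [abs_nonneg k₁]
      calc (1/2) * ‖X₁‖ = Real.sqrt (((1/2) * ‖X₁‖)^2) := by
            rw [Real.sqrt_sq (by positivity)]
        _ ≤ Real.sqrt ‖c₁‖ := Real.sqrt_le_sqrt h1
    have hX₂c : (1/2) * ‖X₂‖ ≤ p k₂ Z₂ X₂ := by
      rw [hp₂c]
      have h1 : ((1/2) * ‖X₂‖) ^ 2 ≤ ‖c₂‖ := by
        have := aux_coef_le e he Z₂ hZ₂ a₂ ha₂0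
        rw [← hc₂] at this
        rw [ha₂] at this
        nlinarith [abs_nonneg k₂]
      calc (1/2) * ‖X₂‖ = Real.sqrt (((1/2) * ‖X₂‖)^2) := by
            rw [Real.sqrt_sq (by positivity)]
        _ ≤ Real.sqrt ‖c₂‖ := Real.sqrt_le_sqrt h1
    have hp₁0 : 0 ≤ p k₁ Z₁ X₁ := by rw [hp₁c]; exact Real.sqrt_nonneg _
    have hp₂0 : 0 ≤ p k₂ Z₂ X₂ := by rw [hp₂c]; exact Real.sqrt_nonneg _
    have hp₁sq : (p k₁ Z₁ X₁) ^ 2 = ‖c₁‖ := by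
      rw [hp₁c, Real.sq_sqrt (norm_nonneg _)]
    have hp₂sq : (p k₂ Z₂ X₂) ^ 2 = ‖c₂‖ := by
      rw [hp₂c, Real.sq_sqrt (norm_nonneg _)]
    rw [hp]
    have goal_sq : ‖((1/4) * ‖X₁ + X₂‖ ^ 2 + |k₁ + k₂|) • e + (Z₁ + Z₂ + (1/2 : ℝ) • br X₁ X₂)‖
        ≤ (p k₁ Z₁ X₁ + p k₂ Z₂ X₂) ^ 2 := by
      have hmain : ‖A • e + W‖ ≤ ‖c₁‖ + ‖c₂‖ + (1/2) * (‖X₁‖ * ‖X₂‖) := le_trans step1 step2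
      have h2p : (1/2) * (‖X₁‖ * ‖X₂‖) ≤ 2 * (p k₁ Z₁ X₁ * p k₂ Z₂ X₂) := by
        nlinarith [norm_nonneg X₁, norm_nonneg X₂]
      have hexp : (p k₁ Z₁ X₁ + p k₂ Z₂ X₂) ^ 2
          = ‖c₁‖ + ‖c₂‖ + 2 * (p k₁ Z₁ X₁ * p k₂ Z₂ X₂) := by
        rw [← hp₁sq, ← hp₂sq]; ring
      rw [hexp]
      calc ‖((1/4) * ‖X₁ + X₂‖ ^ 2 + |k₁ + k₂|) • e + (Z₁ + Z₂ + (1/2 : ℝ) • br X₁ X₂)‖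
          = ‖A • e + W‖ := by rw [hA, hW]
        _ ≤ ‖c₁‖ + ‖c₂‖ + (1/2) * (‖X₁‖ * ‖X₂‖) := hmain
        _ ≤ ‖c₁‖ + ‖c₂‖ + 2 * (p k₁ Z₁ X₁ * p k₂ Z₂ X₂) := by linarith
    calc Real.sqrt ‖((1/4) * ‖X₁ + X₂‖ ^ 2 + |k₁ + k₂|) • e + (Z₁ + Z₂ + (1/2 : ℝ) • br X₁ X₂)‖
        ≤ Real.sqrt ((p k₁ Z₁ X₁ + p k₂ Z₂ X₂) ^ 2) := Real.sqrt_le_sqrt goal_sq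
      _ = p k₁ Z₁ X₁ + p k₂ Z₂ X₂ := Real.sqrt_sq (by linarith)
end

section
/- Let T be a topological space, π: T → Q an open continuous surjective quotient map, and U ⊆ Q. Then the complement in Q of π(complement of the boundary of π^{-1}(U)) equals the boundary ∂U of U in Q. -/
/-- for an open continuous surjective quotient map `f : T → Q`
and `U ⊆ Q`, the complement in `Q` of `f(complement of the boundary of f⁻¹(U))`
equals the boundary of `U` in `Q`. -/
theorem compl_image_compl_frontier_preimage
    {T Q : Type*} [TopologicalSpace T] [TopologicalSpace Q]
    (f : T → Q) (hopen : IsOpenMap f) (hcont : Continuous f)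
    (hsurj : Function.Surjective f) (U : Set Q) :
    (f '' (frontier (f ⁻¹' U))ᶜ)ᶜ = frontier U := by
  rw [← hopen.preimage_frontier_eq_frontier_preimage hcont, ← Set.preimage_compl,
    Set.image_preimage_eq _ hsurj, compl_compl]
end
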